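/- arXiv:2509.24653 — 2 statements merged into one kernel-verified Lean document; each statement's English description precedes it below -/
import Mathlib

section
/- Fix an integer n ≥ 1. If the minimum of ‖W‖_* over all matrices W ∈ ℝ^{(2n+2)×(2n)} satisfying the one-hop-plus-identity margin constraints is attained, then it is attained by a matrix of restricted form whose parameters satisfy a1 ≥ 1, b1 ≥ 1, d1 ≥ 1, a1+a2+e ≥ c1+c2+g+1, d1+d2+h ≥ b1+b2+f+1, and b1+b2 ≥ d1+d2+1. -/
/-! The feasible set is convex, and both it and the nuclear norm are invariant under relabelling
the indices `1, …, n` simultaneously in the input tokens `a_i, b_i` and the output tokens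
`b_i, c_i`. Averaging a minimiser over all `n!` relabellings therefore gives a feasible matrix of
no larger, hence equal, nuclear norm; being invariant, it has restricted form. Convexity of the
nuclear norm comes from the duality `tr(Uᴴ W) ≤ ‖W‖_*` for contractions `U`, with equality
for a suitable `U`. The parameter inequalities are individual margin constraints; for `n = 1` the
matrix does not determine `a1, b1, d1`, which can then be taken equal to `1`. -/

/-- The nuclear norm of a real matrix: the trace of the positive semidefinite
square root of `Wᵀ * W` (equivalently, the sum of the singular values of `W`). -/
noncomputable def nuclearNorm {m k : Type*} [Fintype m] [Fintype k] [DecidableEq k]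
    (W : Matrix m k ℝ) : ℝ :=
  ((Matrix.posSemidef_conjTranspose_mul_self W).1.eigenvectorUnitary.1 *
    Matrix.diagonal ((RCLike.ofReal : ℝ → ℝ) ∘ (√·) ∘ (Matrix.posSemidef_conjTranspose_mul_self W).1.eigenvalues) *
    (star (Matrix.posSemidef_conjTranspose_mul_self W).1.eigenvectorUnitary :
      Matrix k k ℝ)).trace

/-- The restricted-form matrix in `ℝ^{(2n+2)×(2n)}`.  Rows are indexed by the input
tokens `a_1,…,a_n` (`Sum.inl i`), `b_1,…,b_n` (`Sum.inr (Sum.inl i)`) and the relation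
tokens `r_1, r_2` (`Sum.inr (Sum.inr k)`, `k = 0, 1`); columns by the output tokens
`b_1,…,b_n` (`Sum.inl j`) and `c_1,…,c_n` (`Sum.inr j`). -/
def restrictedW (n : ℕ) (a1 a2 b1 b2 c1 c2 d1 d2 e f g h : ℝ) :
    Matrix (Fin n ⊕ Fin n ⊕ Fin 2) (Fin n ⊕ Fin n) ℝ :=
  fun r y =>
    match r, y with
    | Sum.inl i, Sum.inl j => (if i = j then a1 else 0) + a2
    | Sum.inl i, Sum.inr j => (if i = j then c1 else 0) + c2
    | Sum.inr (Sum.inl i), Sum.inl j => (if i = j then b1 else 0) + b2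
    | Sum.inr (Sum.inl i), Sum.inr j => (if i = j then d1 else 0) + d2
    | Sum.inr (Sum.inr k), Sum.inl _ => if k = 0 then e else f
    | Sum.inr (Sum.inr k), Sum.inr _ => if k = 0 then g else h

/-- The one-hop margin constraints: for every `i`,
`W[a_i,b_i] + W[r_1,b_i] ≥ W[a_i,y] + W[r_1,y] + 1` for every output token `y ≠ b_i`, and
`W[b_i,c_i] + W[r_2,c_i] ≥ W[b_i,y] + W[r_2,y] + 1` for every output token `y ≠ c_i`. -/
def OneHopMargin (n : ℕ) (W : Matrix (Fin n ⊕ Fin n ⊕ Fin 2) (Fin n ⊕ Fin n) ℝ) : Prop :=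
  ∀ i : Fin n,
    (∀ y : Fin n ⊕ Fin n, y ≠ Sum.inl i →
      W (Sum.inl i) (Sum.inl i) + W (Sum.inr (Sum.inr 0)) (Sum.inl i)
        ≥ W (Sum.inl i) y + W (Sum.inr (Sum.inr 0)) y + 1) ∧
    (∀ y : Fin n ⊕ Fin n, y ≠ Sum.inr i →
      W (Sum.inr (Sum.inl i)) (Sum.inr i) + W (Sum.inr (Sum.inr 1)) (Sum.inr i)
        ≥ W (Sum.inr (Sum.inl i)) y + W (Sum.inr (Sum.inr 1)) y + 1)

/-- The identity-bridge margin constraints: for every `i`,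
`W[b_i,b_i] ≥ W[b_i,y] + 1` for every output token `y ≠ b_i`. -/
def IdentityMargin (n : ℕ) (W : Matrix (Fin n ⊕ Fin n ⊕ Fin 2) (Fin n ⊕ Fin n) ℝ) : Prop :=
  ∀ i : Fin n, ∀ y : Fin n ⊕ Fin n, y ≠ Sum.inl i →
    W (Sum.inr (Sum.inl i)) (Sum.inl i) ≥ W (Sum.inr (Sum.inl i)) y + 1

open Matrix Equiv

theorem diag_conjTranspose_mul {m k : Type*} [Fintype m] (P Q : Matrix m k ℝ) (j : k) :
    (Pᴴ * Q) j j = ∑ r, P r j * Q r j := by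
  simp [mul_apply]

section NuclearNorm

variable {m k : Type*} [Fintype m] [Fintype k] [DecidableEq k]

open scoped MatrixOrder in
theorem nuclearNorm_eq_trace_sqrt (W : Matrix m k ℝ) :
    nuclearNorm W = (CFC.sqrt (Wᴴ * W)).trace := by
  have hA := posSemidef_conjTranspose_mul_self W
  rw [CFC.sqrt_eq_real_sqrt _ hA.nonneg, cfcₙ_eq_cfc, hA.1.cfc_eq, IsHermitian.cfc,
    Unitary.conjStarAlgAut_apply]
  rfl

open scoped MatrixOrder in
theorem nuclearNorm_eq_sum_sqrt {W : Matrix m k ℝ} {V : Matrix k k ℝ} {lam : k → ℝ}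
    (hVV : Vᴴ * V = 1) (hVV' : V * Vᴴ = 1) (hdiag : Vᴴ * (Wᴴ * W) * V = diagonal lam)
    (hlam : ∀ j, 0 ≤ lam j) :
    nuclearNorm W = ∑ j, √(lam j) := by
  set D := diagonal fun j => √(lam j)
  set B := V * D * Vᴴ
  have hB : B.PosSemidef :=
    (PosSemidef.diagonal fun j => Real.sqrt_nonneg (lam j)).mul_mul_conjTranspose_same V
  have hBB : B * B = Wᴴ * W := by
    calc B * B = V * (D * (Vᴴ * V) * D) * Vᴴ := by simp only [B, Matrix.mul_assoc]
      _ = V * (Vᴴ * (Wᴴ * W) * V) * Vᴴ := by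
          rw [hVV, Matrix.mul_one, diagonal_mul_diagonal, hdiag]
          simp only [Real.mul_self_sqrt (hlam _)]
      _ = V * Vᴴ * (Wᴴ * W) * (V * Vᴴ) := by simp only [Matrix.mul_assoc]
      _ = Wᴴ * W := by rw [hVV', Matrix.one_mul, Matrix.mul_one]
  rw [nuclearNorm_eq_trace_sqrt, CFC.sqrt_unique hBB hB.nonneg, trace_mul_comm,
    ← Matrix.mul_assoc, hVV, Matrix.one_mul, trace_diagonal]

theorem exists_orthogonal_diagonalization (A : Matrix k k ℝ) (hA : A.PosSemidef) :
    ∃ (V : Matrix k k ℝ) (lam : k → ℝ),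
      Vᴴ * V = 1 ∧ V * Vᴴ = 1 ∧ Vᴴ * A * V = diagonal lam ∧ ∀ j, 0 ≤ lam j := by
  have hU := hA.1.eigenvectorUnitary.2
  refine ⟨hA.1.eigenvectorUnitary, hA.1.eigenvalues, ?_, ?_, ?_, hA.eigenvalues_nonneg⟩
  · simpa [star_eq_conjTranspose] using (mem_unitaryGroup_iff').mp hU
  · simpa [star_eq_conjTranspose] using (mem_unitaryGroup_iff).mp hU
  · simpa [Unitary.conjStarAlgAut_apply, star_eq_conjTranspose] using
      hA.1.conjStarAlgAut_star_eigenvectorUnitary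

theorem trace_conjTranspose_mul_le_nuclearNorm (W U : Matrix m k ℝ)
    (hU : (1 - Uᴴ * U).PosSemidef) :
    (Uᴴ * W).trace ≤ nuclearNorm W := by
  obtain ⟨V, lam, hVV, hVV', hdiag, hlam⟩ :=
    exists_orthogonal_diagonalization _ (posSemidef_conjTranspose_mul_self W)
  have htrace : (Uᴴ * W).trace = ((U * V)ᴴ * (W * V)).trace := by
    rw [conjTranspose_mul, Matrix.mul_assoc, ← Matrix.mul_assoc Uᴴ, trace_mul_comm Vᴴ,
      Matrix.mul_assoc, hVV', Matrix.mul_one]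
  rw [htrace, nuclearNorm_eq_sum_sqrt hVV hVV' hdiag hlam, trace]
  refine Finset.sum_le_sum fun j _ => ?_
  have hWV : ∑ r, (W * V) r j ^ 2 = lam j := by
    have : ((W * V)ᴴ * (W * V)) j j = lam j := by
      rw [conjTranspose_mul, Matrix.mul_assoc, ← Matrix.mul_assoc Wᴴ, ← Matrix.mul_assoc,
        hdiag, diagonal_apply_eq]
    simpa only [diag_conjTranspose_mul, sq] using this
  have hUV : ∑ r, (U * V) r j ^ 2 ≤ 1 := by
    have h := (hU.conjTranspose_mul_mul_same V).diag_nonneg (i := j)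
    rw [Matrix.mul_sub, Matrix.sub_mul, Matrix.mul_one, hVV, ← Matrix.mul_assoc,
      Matrix.mul_assoc _ U, ← conjTranspose_mul] at h
    rw [Matrix.sub_apply, one_apply_eq, diag_conjTranspose_mul, sub_nonneg] at h
    simpa only [sq] using h
  calc (diag ((U * V)ᴴ * (W * V))) j = ∑ r, (U * V) r j * (W * V) r j :=
        diag_conjTranspose_mul _ _ j
    _ ≤ √(∑ r, (U * V) r j ^ 2) * √(∑ r, (W * V) r j ^ 2) :=
        Real.sum_mul_le_sqrt_mul_sqrt _ _ _
    _ ≤ 1 * √(lam j) := by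
        rw [hWV]
        gcongr
        exact Real.sqrt_le_one.mpr hUV
    _ = √(lam j) := one_mul _

/-- The bound is attained at `U = W V diag(λ^{-1/2}) Vᴴ`, using `0⁻¹ = 0` on the kernel. -/
theorem exists_trace_conjTranspose_mul_eq_nuclearNorm (W : Matrix m k ℝ) :
    ∃ U : Matrix m k ℝ, (1 - Uᴴ * U).PosSemidef ∧ (Uᴴ * W).trace = nuclearNorm W := by
  obtain ⟨V, lam, hVV, hVV', hdiag, hlam⟩ :=
    exists_orthogonal_diagonalization _ (posSemidef_conjTranspose_mul_self W)
  set p : k → ℝ := fun j => (√(lam j))⁻¹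
  have hUH : (W * V * diagonal p * Vᴴ)ᴴ = V * diagonal p * Vᴴ * Wᴴ := by
    simp only [conjTranspose_mul, diagonal_conjTranspose, conjTranspose_conjTranspose,
      star_trivial, Matrix.mul_assoc]
  refine ⟨W * V * diagonal p * Vᴴ, ?_, ?_⟩
  · have h : 1 - (W * V * diagonal p * Vᴴ)ᴴ * (W * V * diagonal p * Vᴴ) =
        V * diagonal (fun j => 1 - p j * lam j * p j) * Vᴴ := by
      calc _ = V * Vᴴ - V * (diagonal p * (Vᴴ * (Wᴴ * W) * V) * diagonal p) * Vᴴ := by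
            rw [hUH, hVV']; simp only [Matrix.mul_assoc]
        _ = _ := by
            have h1 : diagonal (fun j => 1 - p j * lam j * p j) =
                1 - diagonal fun j => p j * lam j * p j := by
              rw [← diagonal_one, diagonal_sub]
            rw [hdiag, diagonal_mul_diagonal, diagonal_mul_diagonal, h1, Matrix.mul_sub,
              Matrix.sub_mul, Matrix.mul_one]
    rw [h]
    refine (PosSemidef.diagonal fun j => ?_).mul_mul_conjTranspose_same V
    rw [Pi.zero_apply, sub_nonneg, ← Real.mul_self_sqrt (hlam j)]
    calc p j * (√(lam j) * √(lam j)) * p j = (√(lam j) * p j) * (√(lam j) * p j) := by ring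
      _ ≤ 1 * 1 := by gcongr <;> exact mul_inv_le_one
      _ = 1 := one_mul 1
  · calc ((W * V * diagonal p * Vᴴ)ᴴ * W).trace
          = (diagonal p * (Vᴴ * (Wᴴ * W) * V)).trace := by
            rw [hUH]
            simp only [Matrix.mul_assoc]
            rw [trace_mul_comm V]
            simp only [Matrix.mul_assoc]
      _ = ∑ j, √(lam j) := by
            rw [hdiag, diagonal_mul_diagonal, trace_diagonal]
            simp only [p, inv_mul_eq_div, Real.div_sqrt]
      _ = nuclearNorm W := (nuclearNorm_eq_sum_sqrt hVV hVV' hdiag hlam).symm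

theorem nuclearNorm_add_le (W₁ W₂ : Matrix m k ℝ) :
    nuclearNorm (W₁ + W₂) ≤ nuclearNorm W₁ + nuclearNorm W₂ := by
  obtain ⟨U, hU, htrace⟩ := exists_trace_conjTranspose_mul_eq_nuclearNorm (W₁ + W₂)
  rw [← htrace, Matrix.mul_add, trace_add]
  exact add_le_add (trace_conjTranspose_mul_le_nuclearNorm W₁ U hU)
    (trace_conjTranspose_mul_le_nuclearNorm W₂ U hU)

theorem nuclearNorm_smul {c : ℝ} (hc : 0 ≤ c) (W : Matrix m k ℝ) :
    nuclearNorm (c • W) = c * nuclearNorm W := by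
  obtain ⟨V, lam, hVV, hVV', hdiag, hlam⟩ :=
    exists_orthogonal_diagonalization _ (posSemidef_conjTranspose_mul_self W)
  have hdiag' : Vᴴ * ((c • W)ᴴ * (c • W)) * V = diagonal fun j => c * c * lam j := by
    simp only [conjTranspose_smul, star_trivial, Matrix.smul_mul, Matrix.mul_smul, smul_smul,
      hdiag, ← diagonal_smul]
    rfl
  rw [nuclearNorm_eq_sum_sqrt hVV hVV' hdiag' fun j => by have := hlam j; positivity,
    nuclearNorm_eq_sum_sqrt hVV hVV' hdiag hlam, Finset.mul_sum]
  simp only [Real.sqrt_mul (mul_self_nonneg c), Real.sqrt_mul_self hc]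

theorem nuclearNorm_submatrix {m' k' : Type*} [Fintype m'] [Fintype k'] [DecidableEq k']
    (W : Matrix m k ℝ) (er : m' ≃ m) (ec : k' ≃ k) :
    nuclearNorm (W.submatrix er ec) = nuclearNorm W := by
  obtain ⟨V, lam, hVV, hVV', hdiag, hlam⟩ :=
    exists_orthogonal_diagonalization _ (posSemidef_conjTranspose_mul_self W)
  have hVV₁ : (V.submatrix ec ec)ᴴ * V.submatrix ec ec = 1 := by
    rw [conjTranspose_submatrix, submatrix_mul_equiv, hVV, submatrix_one_equiv]
  have hVV₁' : V.submatrix ec ec * (V.submatrix ec ec)ᴴ = 1 := by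
    rw [conjTranspose_submatrix, submatrix_mul_equiv, hVV', submatrix_one_equiv]
  have hdiag₁ : (V.submatrix ec ec)ᴴ * ((W.submatrix er ec)ᴴ * W.submatrix er ec) *
      V.submatrix ec ec = diagonal (lam ∘ ec) := by
    rw [conjTranspose_submatrix, conjTranspose_submatrix, submatrix_mul_equiv,
      submatrix_mul_equiv, submatrix_mul_equiv, hdiag, submatrix_diagonal_equiv]
  rw [nuclearNorm_eq_sum_sqrt hVV₁ hVV₁' hdiag₁ fun j => hlam (ec j),
    nuclearNorm_eq_sum_sqrt hVV hVV' hdiag hlam]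
  exact ec.sum_comp fun j => √(lam j)

theorem convexOn_nuclearNorm : ConvexOn ℝ Set.univ (nuclearNorm : Matrix m k ℝ → ℝ) :=
  ⟨convex_univ, fun W₁ _ W₂ _ a b ha hb _ => by
    simpa only [nuclearNorm_smul ha, nuclearNorm_smul hb, smul_eq_mul] using
      nuclearNorm_add_le (a • W₁) (b • W₂)⟩

end NuclearNorm

theorem exists_perm_map_pair {α : Type*} [DecidableEq α] {i j i' j' : α} (h : i ≠ j)
    (h' : i' ≠ j') : ∃ τ : Perm α, τ i = i' ∧ τ j = j' := by
  have hj : swap i i' j ≠ i' := fun hc =>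
    h ((swap i i').injective (hc.trans (swap_apply_left i i').symm)).symm
  refine ⟨swap (swap i i' j) j' * swap i i', ?_, ?_⟩
  · rw [Perm.mul_apply, swap_apply_left, swap_apply_of_ne_of_ne hj.symm h']
  · rw [Perm.mul_apply, swap_apply_left]

section Average

variable {G m k : Type*} [Group G] [Fintype G] (ρ : G →* Perm m) (κ : G →* Perm k)

def relabel (g : G) (W : Matrix m k ℝ) : Matrix m k ℝ :=
  W.submatrix (ρ g) (κ g)

noncomputable def average (W : Matrix m k ℝ) : Matrix m k ℝ :=
  ∑ g, (Fintype.card G : ℝ)⁻¹ • relabel ρ κ g W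

theorem relabel_average (h : G) (W : Matrix m k ℝ) :
    relabel ρ κ h (average ρ κ W) = average ρ κ W := by
  ext r y
  simp only [average, relabel, submatrix_apply, Matrix.sum_apply, Matrix.smul_apply]
  exact Fintype.sum_equiv (Equiv.mulRight h) _ _ fun g => by
    simp only [Equiv.coe_mulRight, map_mul, Perm.mul_apply]

theorem average_mem {s : Set (Matrix m k ℝ)} (hs : Convex ℝ s)
    (hrelabel : ∀ g, ∀ W ∈ s, relabel ρ κ g W ∈ s) {W : Matrix m k ℝ} (hW : W ∈ s) :
    average ρ κ W ∈ s :=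
  hs.sum_mem (fun _ _ => by positivity)
    (by simp [Finset.card_univ, Fintype.card_ne_zero]) fun g _ => hrelabel g W hW

theorem nuclearNorm_average_le [Fintype m] [Fintype k] [DecidableEq k] (W : Matrix m k ℝ) :
    nuclearNorm (average ρ κ W) ≤ nuclearNorm W := by
  have h := convexOn_nuclearNorm.map_sum_le (t := Finset.univ)
    (w := fun _ : G => (Fintype.card G : ℝ)⁻¹) (p := fun g => relabel ρ κ g W)
    (fun _ _ => by positivity) (by simp [Finset.card_univ, Fintype.card_ne_zero])
    fun _ _ => Set.mem_univ _
  simpa [average, relabel, nuclearNorm_submatrix, Finset.card_univ, Fintype.card_ne_zero]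
    using h

end Average

abbrev TokenMatrix (n : ℕ) : Type := Matrix (Fin n ⊕ Fin n ⊕ Fin 2) (Fin n ⊕ Fin n) ℝ

/-- `π` sends the input tokens `a_i, b_i` to `a_{π i}, b_{π i}` and fixes `r_1, r_2`. -/
def inputRelabel (n : ℕ) : Perm (Fin n) →* Perm (Fin n ⊕ Fin n ⊕ Fin 2) :=
  (Perm.sumCongrHom _ _).comp ((MonoidHom.id _).prod
    ((Perm.sumCongrHom _ _).comp ((MonoidHom.id _).prod 1)))

def outputRelabel (n : ℕ) : Perm (Fin n) →* Perm (Fin n ⊕ Fin n) :=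
  (Perm.sumCongrHom _ _).comp ((MonoidHom.id _).prod (MonoidHom.id _))

variable {n : ℕ}

theorem feasible_relabel (π : Perm (Fin n)) {W : TokenMatrix n}
    (hW : OneHopMargin n W ∧ IdentityMargin n W) :
    OneHopMargin n (relabel (inputRelabel n) (outputRelabel n) π W) ∧
      IdentityMargin n (relabel (inputRelabel n) (outputRelabel n) π W) :=
  ⟨fun i => ⟨fun _ hy => (hW.1 (π i)).1 _ ((outputRelabel n π).injective.ne hy),
    fun _ hy => (hW.1 (π i)).2 _ ((outputRelabel n π).injective.ne hy)⟩,
    fun i _ hy => hW.2 (π i) _ ((outputRelabel n π).injective.ne hy)⟩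

theorem convex_feasible :
    Convex ℝ {W : TokenMatrix n | OneHopMargin n W ∧ IdentityMargin n W} := by
  intro W₁ h₁ W₂ h₂ a b ha hb hab
  refine ⟨fun i => ⟨fun y hy => ?_, fun y hy => ?_⟩, fun i y hy => ?_⟩ <;>
    simp only [Matrix.add_apply, Matrix.smul_apply, smul_eq_mul, ge_iff_le]
  · have := mul_le_mul_of_nonneg_left ((h₁.1 i).1 y hy) ha
    have := mul_le_mul_of_nonneg_left ((h₂.1 i).1 y hy) hb
    linarith
  · have := mul_le_mul_of_nonneg_left ((h₁.1 i).2 y hy) ha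
    have := mul_le_mul_of_nonneg_left ((h₂.1 i).2 y hy) hb
    linarith
  · have := mul_le_mul_of_nonneg_left (h₁.2 i y hy) ha
    have := mul_le_mul_of_nonneg_left (h₂.2 i y hy) hb
    linarith

theorem exists_eq_restrictedW_of_invariant (hn : 1 < n) {W : TokenMatrix n}
    (hW : ∀ π, relabel (inputRelabel n) (outputRelabel n) π W = W) :
    ∃ a1 a2 b1 b2 c1 c2 d1 d2 e f g h : ℝ,
      W = restrictedW n a1 a2 b1 b2 c1 c2 d1 d2 e f g h := by
  have hinv (π : Perm (Fin n)) r y : W (inputRelabel n π r) (outputRelabel n π y) = W r y :=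
    congrFun (congrFun (hW π) r) y
  set i₀ : Fin n := ⟨0, by omega⟩
  set j₁ : Fin n := ⟨1, hn⟩
  have hij₁ : i₀ ≠ j₁ := by simp [i₀, j₁, Fin.ext_iff]
  have block (u : Fin n → Fin n ⊕ Fin n ⊕ Fin 2) (v : Fin n → Fin n ⊕ Fin n)
      (hu : ∀ π i, inputRelabel n π (u i) = u (π i))
      (hv : ∀ π j, outputRelabel n π (v j) = v (π j)) (i j : Fin n) :
      W (u i) (v j) =
        (if i = j then W (u i₀) (v i₀) - W (u i₀) (v j₁) else 0) + W (u i₀) (v j₁) := by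
    split_ifs with hij
    · rw [← hij, ← hinv (swap i₀ i) (u i₀) (v i₀), hu, hv, swap_apply_left]
      ring
    · obtain ⟨τ, hτi, hτj⟩ := exists_perm_map_pair hij₁ hij
      rw [zero_add, ← hinv τ (u i₀) (v j₁), hu, hv, hτi, hτj]
  have relation (t : Fin 2) (v : Fin n → Fin n ⊕ Fin n)
      (hv : ∀ π j, outputRelabel n π (v j) = v (π j)) (j : Fin n) :
      W (.inr (.inr t)) (v j) = W (.inr (.inr t)) (v i₀) := by
    rw [← hinv (swap i₀ j) _ (v i₀), hv, swap_apply_left]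
    rfl
  refine ⟨W (.inl i₀) (.inl i₀) - W (.inl i₀) (.inl j₁), W (.inl i₀) (.inl j₁),
    W (.inr (.inl i₀)) (.inl i₀) - W (.inr (.inl i₀)) (.inl j₁),
    W (.inr (.inl i₀)) (.inl j₁),
    W (.inl i₀) (.inr i₀) - W (.inl i₀) (.inr j₁), W (.inl i₀) (.inr j₁),
    W (.inr (.inl i₀)) (.inr i₀) - W (.inr (.inl i₀)) (.inr j₁),
    W (.inr (.inl i₀)) (.inr j₁),
    W (.inr (.inr 0)) (.inl i₀), W (.inr (.inr 1)) (.inl i₀),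
    W (.inr (.inr 0)) (.inr i₀), W (.inr (.inr 1)) (.inr i₀), ?_⟩
  ext r y
  rcases r with i | i | t <;> rcases y with j | j
  · exact block Sum.inl Sum.inl (fun _ _ => rfl) (fun _ _ => rfl) i j
  · exact block Sum.inl Sum.inr (fun _ _ => rfl) (fun _ _ => rfl) i j
  · exact block (.inr ∘ .inl) Sum.inl (fun _ _ => rfl) (fun _ _ => rfl) i j
  · exact block (.inr ∘ .inl) Sum.inr (fun _ _ => rfl) (fun _ _ => rfl) i j
  · fin_cases t
    · exact relation 0 Sum.inl (fun _ _ => rfl) j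
    · exact relation 1 Sum.inl (fun _ _ => rfl) j
  · fin_cases t
    · exact relation 0 Sum.inr (fun _ _ => rfl) j
    · exact relation 1 Sum.inr (fun _ _ => rfl) j

theorem eq_restrictedW_fin_one (W : TokenMatrix 1) :
    W = restrictedW 1 1 (W (.inl 0) (.inl 0) - 1) 1 (W (.inr (.inl 0)) (.inl 0) - 1)
      0 (W (.inl 0) (.inr 0)) 1 (W (.inr (.inl 0)) (.inr 0) - 1)
      (W (.inr (.inr 0)) (.inl 0)) (W (.inr (.inr 1)) (.inl 0))
      (W (.inr (.inr 0)) (.inr 0)) (W (.inr (.inr 1)) (.inr 0)) := by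
  ext r y
  rcases r with i | i | t <;> rcases y with j | j <;> (try fin_cases t) <;>
    simp [restrictedW, Fin.fin_one_eq_zero]

section Parameters

variable {a1 a2 b1 b2 c1 c2 d1 d2 e f g h : ℝ}

theorem margin_sums_of_restrictedW (hn : 1 ≤ n)
    (hOne : OneHopMargin n (restrictedW n a1 a2 b1 b2 c1 c2 d1 d2 e f g h))
    (hId : IdentityMargin n (restrictedW n a1 a2 b1 b2 c1 c2 d1 d2 e f g h)) :
    c1 + c2 + g + 1 ≤ a1 + a2 + e ∧ b1 + b2 + f + 1 ≤ d1 + d2 + h ∧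
      d1 + d2 + 1 ≤ b1 + b2 := by
  set i₀ : Fin n := ⟨0, hn⟩
  have h₁ := (hOne i₀).1 (.inr i₀) Sum.inr_ne_inl
  have h₂ := (hOne i₀).2 (.inl i₀) Sum.inl_ne_inr
  have h₃ := hId i₀ (.inr i₀) Sum.inr_ne_inl
  simp only [restrictedW, ↓reduceIte, Fin.isValue, ge_iff_le, one_ne_zero] at h₁ h₂ h₃
  exact ⟨by linarith, by linarith, by linarith⟩

theorem one_le_of_restrictedW (hn : 1 < n)
    (hOne : OneHopMargin n (restrictedW n a1 a2 b1 b2 c1 c2 d1 d2 e f g h))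
    (hId : IdentityMargin n (restrictedW n a1 a2 b1 b2 c1 c2 d1 d2 e f g h)) :
    1 ≤ a1 ∧ 1 ≤ b1 ∧ 1 ≤ d1 := by
  set i₀ : Fin n := ⟨0, by omega⟩
  set j₁ : Fin n := ⟨1, hn⟩
  have hij₁ : i₀ ≠ j₁ := by simp [i₀, j₁, Fin.ext_iff]
  have h₁ := (hOne i₀).1 (.inl j₁) (by simpa using hij₁.symm)
  have h₂ := (hOne i₀).2 (.inr j₁) (by simpa using hij₁.symm)
  have h₃ := hId i₀ (.inl j₁) (by simpa using hij₁.symm)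
  simp only [restrictedW, if_true, if_neg hij₁, ge_iff_le] at h₁ h₂ h₃
  exact ⟨by linarith, by linarith, by linarith⟩

end Parameters

theorem exists_eq_restrictedW_of_invariant_of_feasible (hn : 1 ≤ n) {W : TokenMatrix n}
    (hW : ∀ π, relabel (inputRelabel n) (outputRelabel n) π W = W)
    (hfeas : OneHopMargin n W ∧ IdentityMargin n W) :
    ∃ a1 a2 b1 b2 c1 c2 d1 d2 e f g h : ℝ,
      W = restrictedW n a1 a2 b1 b2 c1 c2 d1 d2 e f g h ∧ 1 ≤ a1 ∧ 1 ≤ b1 ∧ 1 ≤ d1 := by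
  obtain rfl | hlt := hn.eq_or_lt
  · exact ⟨_, _, _, _, _, _, _, _, _, _, _, _, eq_restrictedW_fin_one W,
      le_rfl, le_rfl, le_rfl⟩
  · obtain ⟨a1, a2, b1, b2, c1, c2, d1, d2, e, f, g, h, rfl⟩ :=
      exists_eq_restrictedW_of_invariant hlt hW
    exact ⟨a1, a2, b1, b2, c1, c2, d1, d2, e, f, g, h, rfl,
      one_le_of_restrictedW hlt hfeas.1 hfeas.2⟩

/-- Lemma 1 (existence of a restricted-form solution): if the minimum of the nuclear norm
over all matrices satisfying the one-hop-plus-identity margin constraints is attained,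
then it is attained by a restricted-form matrix whose parameters satisfy
`a1 ≥ 1`, `b1 ≥ 1`, `d1 ≥ 1`, `a1+a2+e ≥ c1+c2+g+1`, `d1+d2+h ≥ b1+b2+f+1`,
and `b1+b2 ≥ d1+d2+1`. -/
theorem restricted_form_solution_with_identity (n : ℕ) (hn : 1 ≤ n)
    (W0 : Matrix (Fin n ⊕ Fin n ⊕ Fin 2) (Fin n ⊕ Fin n) ℝ)
    (hW0 : OneHopMargin n W0 ∧ IdentityMargin n W0)
    (hmin : ∀ W : Matrix (Fin n ⊕ Fin n ⊕ Fin 2) (Fin n ⊕ Fin n) ℝ,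
      OneHopMargin n W ∧ IdentityMargin n W → nuclearNorm W0 ≤ nuclearNorm W) :
    ∃ a1 a2 b1 b2 c1 c2 d1 d2 e f g h : ℝ,
      OneHopMargin n (restrictedW n a1 a2 b1 b2 c1 c2 d1 d2 e f g h) ∧
      IdentityMargin n (restrictedW n a1 a2 b1 b2 c1 c2 d1 d2 e f g h) ∧
      nuclearNorm (restrictedW n a1 a2 b1 b2 c1 c2 d1 d2 e f g h) = nuclearNorm W0 ∧
      1 ≤ a1 ∧ 1 ≤ b1 ∧ 1 ≤ d1 ∧
      c1 + c2 + g + 1 ≤ a1 + a2 + e ∧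
      b1 + b2 + f + 1 ≤ d1 + d2 + h ∧
      d1 + d2 + 1 ≤ b1 + b2 := by
  have hW := average_mem (inputRelabel n) (outputRelabel n) convex_feasible
    (fun π _ => feasible_relabel π) hW0
  have hnorm := (nuclearNorm_average_le (inputRelabel n) (outputRelabel n) W0).antisymm
    (hmin _ hW)
  obtain ⟨a1, a2, b1, b2, c1, c2, d1, d2, e, f, g, h, hWeq, ha1, hb1, hd1⟩ :=
    exists_eq_restrictedW_of_invariant_of_feasible hn (relabel_average _ _ · W0) hW
  rw [hWeq] at hW hnorm
  exact ⟨a1, a2, b1, b2, c1, c2, d1, d2, e, f, g, h, hW.1, hW.2, hnorm, ha1, hb1, hd1,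
    margin_sums_of_restrictedW hn hW.1 hW.2⟩
end

section
/- Fix an integer n > 1. The optimal value of Problem (Q) equals 2·(n−1), and it is attained at the feasible point a1 = 1, a2 = −1/n, b1 = −1/(n−1), b2 = 1/(n·(n−1)), α = 0. -/
/-- Objective of Problem (Q). -/
noncomputable def FQ (n : ℕ) (a1 a2 b1 b2 α : ℝ) : ℝ :=
  ((n : ℝ) - 1) * Real.sqrt (2 * (a1 ^ 2 + b1 ^ 2) + 2 * |a1 ^ 2 - b1 ^ 2|) +
    2 * Real.sqrt ((a1 + n * a2) ^ 2 + n * α ^ 2)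

/-- Feasible set of Problem (Q). -/
def FeasQ (n : ℕ) (a1 a2 b1 b2 α : ℝ) : Prop :=
  1 ≤ a1 ∧ b1 + b2 - α + 1 ≤ a1 + a2 + α ∧ a1 + b1 + n * (a2 + b2) = 0

/-!
The first square root equals `2 · max |a1| |b1|`, so on the feasible set the first term alone is at
least `2 (n - 1) a1 ≥ 2 (n - 1)`, while the second term is nonnegative. At the given point both
bounds are tight: `max |a1| |b1| = a1 = 1` and `a1 + n a2 = α = 0`.
-/

open Real

lemma two_mul_add_two_mul_abs_sub_sq (a b : ℝ) :
    2 * (a ^ 2 + b ^ 2) + 2 * |a ^ 2 - b ^ 2| = (2 * max |a| |b|) ^ 2 := by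
  rw [mul_pow]
  rcases le_total |a| |b| with h | h
  · rw [max_eq_right h, abs_of_nonpos (sub_nonpos.2 (sq_le_sq.2 h)), sq_abs]
    ring
  · rw [max_eq_left h, abs_of_nonneg (sub_nonneg.2 (sq_le_sq.2 h)), sq_abs]
    ring

lemma sqrt_two_mul_add_two_mul_abs_sub (a b : ℝ) :
    √(2 * (a ^ 2 + b ^ 2) + 2 * |a ^ 2 - b ^ 2|) = 2 * max |a| |b| := by
  rw [two_mul_add_two_mul_abs_sub_sq, sqrt_sq (by positivity)]

lemma FQ_eq_max_abs (n : ℕ) (a1 a2 b1 b2 α : ℝ) :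
    FQ n a1 a2 b1 b2 α =
      2 * ((n : ℝ) - 1) * max |a1| |b1| + 2 * √((a1 + n * a2) ^ 2 + n * α ^ 2) := by
  rw [FQ, sqrt_two_mul_add_two_mul_abs_sub]
  ring

lemma two_mul_sub_one_le_FQ {n : ℕ} (hn : 1 ≤ n) {a1 : ℝ} (ha1 : 1 ≤ a1) (a2 b1 b2 α : ℝ) :
    2 * ((n : ℝ) - 1) ≤ FQ n a1 a2 b1 b2 α := by
  have hn' : (0 : ℝ) ≤ 2 * ((n : ℝ) - 1) := by
    have : (1 : ℝ) ≤ n := by exact_mod_cast hn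
    linarith
  have hmax : 1 ≤ max |a1| |b1| := ha1.trans ((le_abs_self a1).trans (le_max_left _ _))
  have := mul_le_mul_of_nonneg_left hmax hn'
  rw [FQ_eq_max_abs]
  linarith [sqrt_nonneg ((a1 + n * a2) ^ 2 + n * α ^ 2)]

lemma feasQ_optimum {n : ℕ} (hn : 1 < n) :
    FeasQ n 1 (-(1 / (n : ℝ))) (-(1 / ((n : ℝ) - 1))) (1 / ((n : ℝ) * ((n : ℝ) - 1))) 0 := by
  have hn1 : (n : ℝ) - 1 ≠ 0 := sub_ne_zero.2 (by exact_mod_cast hn.ne')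
  have hn0 : (n : ℝ) ≠ 0 := by positivity
  refine ⟨le_rfl, le_of_eq ?_, ?_⟩ <;> field_simp <;> ring

lemma FQ_optimum {n : ℕ} (hn : 1 < n) :
    FQ n 1 (-(1 / (n : ℝ))) (-(1 / ((n : ℝ) - 1))) (1 / ((n : ℝ) * ((n : ℝ) - 1))) 0 =
      2 * ((n : ℝ) - 1) := by
  have hn1 : (1 : ℝ) ≤ (n : ℝ) - 1 := by
    have : (2 : ℝ) ≤ n := by exact_mod_cast hn
    linarith
  have hb1 : |-(1 / ((n : ℝ) - 1))| ≤ |1| := by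
    rw [abs_neg, abs_one, abs_of_pos (by positivity)]
    exact div_le_one_of_le₀ hn1 (by positivity)
  have hn0 : (n : ℝ) ≠ 0 := by positivity
  have hcancel : 1 + (n : ℝ) * -(1 / (n : ℝ)) = 0 := by field_simp; ring
  rw [FQ_eq_max_abs, max_eq_left hb1, abs_one, hcancel]
  simp

/-- The optimal value of Problem (Q) is `2·(n−1)`, attained at the feasible point
`a1 = 1`, `a2 = −1/n`, `b1 = −1/(n−1)`, `b2 = 1/(n·(n−1))`, `α = 0`. -/
theorem Q_optimal_value (n : ℕ) (hn : 1 < n) :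
    FeasQ n 1 (-(1 / (n : ℝ))) (-(1 / ((n : ℝ) - 1))) (1 / ((n : ℝ) * ((n : ℝ) - 1))) 0 ∧
    FQ n 1 (-(1 / (n : ℝ))) (-(1 / ((n : ℝ) - 1))) (1 / ((n : ℝ) * ((n : ℝ) - 1))) 0 =
      2 * ((n : ℝ) - 1) ∧
    ∀ a1 a2 b1 b2 α : ℝ, FeasQ n a1 a2 b1 b2 α →
      2 * ((n : ℝ) - 1) ≤ FQ n a1 a2 b1 b2 α :=
  ⟨feasQ_optimum hn, FQ_optimum hn,
    fun _ a2 b1 b2 α h ↦ two_mul_sub_one_le_FQ hn.le h.1 a2 b1 b2 α⟩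
end
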